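/- arXiv:math/0503407 — 2 statements merged into one kernel-verified Lean document; each statement's English description precedes it below -/
import Mathlib

section
/- Let S be a partially ordered set with a simply connected extension (∼_u, ∼_l). If a, b, c ∈ S and c ∈ B_{a,b}, then B_{a,c} ∩ B_{c,b} = {c}. -/
/-!
For distinct `x` and `y`, call the step from `x` to `y` ascending when `x < y` or `x ∼ᵤ y`, so that
otherwise `y < x` or `x ∼ₗ y`. Checking the eight ways in which `x` can lie between `a` and `c`, the
step from `c` to `x` ascends exactly when the step from `c` to `a` does: every `x ≠ c` of `B_{a,c}`
leaves `c` in the direction of `a`, and every `x ≠ c` of `B_{c,b}` in the direction of `b`.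
Checking the eight ways in which `c` can lie between `a` and `b`, these two directions are
opposite, so `c` is the only common point.
-/

open Pointwise

namespace PaperSC

variable {S : Type*}

/-- Exactly one of four propositions holds. -/
def ExactlyOne4 (p q r s : Prop) : Prop :=
  (p ∨ q ∨ r ∨ s) ∧ (p → ¬q ∧ ¬r ∧ ¬s) ∧ (q → ¬r ∧ ¬s) ∧ (r → ¬s)

/-- `x` and `y` are incomparable with respect to the strict order `lt`. -/
def Incomp (lt : S → S → Prop) (x y : S) : Prop :=
  x ≠ y ∧ ¬ lt x y ∧ ¬ lt y x

/-- The reflexive closure of `lt`. -/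
def Le' (lt : S → S → Prop) (x y : S) : Prop := x = y ∨ lt x y

/-- `x ∼ᵤ y` : `x` and `y` are incomparable and have a common upper bound. -/
def SimU (lt : S → S → Prop) (x y : S) : Prop :=
  Incomp lt x y ∧ ∃ z, Le' lt x z ∧ Le' lt y z

/-- `x ∼ₗ y` : `x` and `y` are incomparable and have a common lower bound. -/
def SimL (lt : S → S → Prop) (x y : S) : Prop :=
  Incomp lt x y ∧ ∃ z, Le' lt z x ∧ Le' lt z y

/-- Every incomparable pair has a common upper bound or a common lower bound. -/
def StronglyConnectedRel (lt : S → S → Prop) : Prop :=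
  ∀ x y, Incomp lt x y → SimU lt x y ∨ SimL lt x y

/-- Acyclicity: `x ∼ᵤ y` and `x ∼ₗ z` imply `y < z`. -/
def AcyclicRel (lt : S → S → Prop) : Prop :=
  ∀ x y z, SimU lt x y → SimL lt x z → lt y z

/-- `(u, l)` is a simply connected extension of the strict partial order `lt`. -/
structure IsSCExt (lt u l : S → S → Prop) : Prop where
  u_symm : ∀ x y, u x y → u y x
  l_symm : ∀ x y, l x y → l y x
  exactly_one : ∀ x y, x ≠ y → ExactlyOne4 (lt x y) (lt y x) (u x y) (l x y)
  u_of_ub : ∀ x y, Incomp lt x y → (∃ z, Le' lt x z ∧ Le' lt y z) → u x y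
  l_of_lb : ∀ x y, Incomp lt x y → (∃ z, Le' lt z x ∧ Le' lt z y) → l x y
  acyclic : ∀ x y z, u x y → l x z → lt y z

/-- `b` is between `a` and `c` (with respect to `lt` and the extension `(u, l)`). -/
def Btwn (lt u l : S → S → Prop) (a c b : S) : Prop :=
  (lt a c ∧ ((lt a b ∧ lt b c) ∨ (u a b ∧ l b c))) ∨
  (lt c a ∧ ((lt c b ∧ lt b a) ∨ (u c b ∧ l b a))) ∨
  (l a c ∧ ((l a b ∧ lt b c) ∨ (l c b ∧ lt b a))) ∨
  (u a c ∧ ((u a b ∧ lt c b) ∨ (u c b ∧ lt a b)))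

/-- The between set `B_{a,b}`; it equals `{a}` when `a = b`. -/
def BSet (lt u l : S → S → Prop) (a b : S) : Set S :=
  {a, b} ∪ {x | a ≠ b ∧ Btwn lt u l a b x}

/-- The set `A` is totally ordered by `lt`. -/
def IsChainRel (lt : S → S → Prop) (A : Set S) : Prop :=
  ∀ p ∈ A, ∀ q ∈ A, p = q ∨ lt p q ∨ lt q p

/-- `x O y` iff `B_{x,y}` is totally ordered by `lt`. -/
def ORel (lt u l : S → S → Prop) (x y : S) : Prop :=
  IsChainRel lt (BSet lt u l x y)

/-- The extension is rectifiable: every between set is a finite union of `O`-classes. -/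
def Rectifiable (lt u l : S → S → Prop) : Prop :=
  ∀ a b : S, a ≠ b → ∃ F : Finset S,
    (↑F : Set S) ⊆ BSet lt u l a b ∧
    ∀ x ∈ BSet lt u l a b, ∃ c ∈ F, ORel lt u l x c

def Ascends (lt u : S → S → Prop) (x y : S) : Prop := lt x y ∨ u x y

namespace IsSCExt

variable {lt u l : S → S → Prop} {a b c x y : S}

theorem not_ascends_of_lt (h : IsSCExt lt u l) (hyx : lt y x) (hxy : x ≠ y) :
    ¬ Ascends lt u x y := by
  have hexcl := (h.exactly_one y x hxy.symm).2.1 hyx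
  rintro (hxy' | hu)
  · exact hexcl.1 hxy'
  · exact hexcl.2.1 (h.u_symm x y hu)

theorem not_ascends_of_l (h : IsSCExt lt u l) (hl : l x y) (hxy : x ≠ y) :
    ¬ Ascends lt u x y := by
  have hexcl := h.exactly_one x y hxy
  rintro (hlt | hu)
  · exact (hexcl.2.1 hlt).2.2 hl
  · exact hexcl.2.2.2 hu hl

theorem btwn_comm (h : IsSCExt lt u l) : Btwn lt u l a c x ↔ Btwn lt u l c a x := by
  have hu := h.u_symm
  have hl := h.l_symm
  unfold Btwn
  grind

theorem bset_comm (h : IsSCExt lt u l) : BSet lt u l a b = BSet lt u l b a := by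
  ext x
  simp only [BSet, Set.mem_union, Set.mem_insert_iff, Set.mem_singleton_iff, Set.mem_ofPred_eq,
    h.btwn_comm (a := a), ne_comm (a := a)]
  tauto

theorem ascends_iff_of_btwn (h : IsSCExt lt u l) (hac : a ≠ c) (hxc : x ≠ c)
    (hx : Btwn lt u l a c x) : Ascends lt u c x ↔ Ascends lt u c a := by
  rcases hx with ⟨hac', ⟨-, hxc'⟩ | ⟨-, hxc'⟩⟩ | ⟨hca', ⟨hcx, -⟩ | ⟨hcx, -⟩⟩ |
    ⟨hac', ⟨-, hxc'⟩ | ⟨hcx, -⟩⟩ | ⟨hac', ⟨-, hcx⟩ | ⟨hcx, -⟩⟩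
  · exact iff_of_false (h.not_ascends_of_lt hxc' hxc.symm) (h.not_ascends_of_lt hac' hac.symm)
  · exact iff_of_false (h.not_ascends_of_l (h.l_symm _ _ hxc') hxc.symm)
      (h.not_ascends_of_lt hac' hac.symm)
  · exact iff_of_true (Or.inl hcx) (Or.inl hca')
  · exact iff_of_true (Or.inr hcx) (Or.inl hca')
  · exact iff_of_false (h.not_ascends_of_lt hxc' hxc.symm)
      (h.not_ascends_of_l (h.l_symm _ _ hac') hac.symm)
  · exact iff_of_false (h.not_ascends_of_l hcx hxc.symm)
      (h.not_ascends_of_l (h.l_symm _ _ hac') hac.symm)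
  · exact iff_of_true (Or.inl hcx) (Or.inr (h.u_symm _ _ hac'))
  · exact iff_of_true (Or.inr hcx) (Or.inr (h.u_symm _ _ hac'))

theorem xor_ascends_of_btwn (h : IsSCExt lt u l) (hca : c ≠ a) (hcb : c ≠ b)
    (hc : Btwn lt u l a b c) : Xor (Ascends lt u c a) (Ascends lt u c b) := by
  rcases hc with ⟨-, ⟨hac, hcb'⟩ | ⟨hac, hcb'⟩⟩ | ⟨-, ⟨hbc, hca'⟩ | ⟨hbc, hca'⟩⟩ |
    ⟨-, ⟨hac, hcb'⟩ | ⟨hbc, hca'⟩⟩ | ⟨-, ⟨hac, hbc⟩ | ⟨hbc, hac⟩⟩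
  · exact Or.inr ⟨Or.inl hcb', h.not_ascends_of_lt hac hca⟩
  · exact Or.inl ⟨Or.inr (h.u_symm _ _ hac), h.not_ascends_of_l hcb' hcb⟩
  · exact Or.inl ⟨Or.inl hca', h.not_ascends_of_lt hbc hcb⟩
  · exact Or.inr ⟨Or.inr (h.u_symm _ _ hbc), h.not_ascends_of_l hca' hca⟩
  · exact Or.inr ⟨Or.inl hcb', h.not_ascends_of_l (h.l_symm _ _ hac) hca⟩
  · exact Or.inl ⟨Or.inl hca', h.not_ascends_of_l (h.l_symm _ _ hbc) hcb⟩
  · exact Or.inl ⟨Or.inr (h.u_symm _ _ hac), h.not_ascends_of_lt hbc hcb⟩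
  · exact Or.inr ⟨Or.inr (h.u_symm _ _ hbc), h.not_ascends_of_lt hac hca⟩

theorem ascends_iff_of_mem_bset (h : IsSCExt lt u l) (hx : x ∈ BSet lt u l a c) (hxc : x ≠ c) :
    Ascends lt u c x ↔ Ascends lt u c a := by
  rcases hx with (rfl | rfl) | ⟨hac, hx⟩
  · rfl
  · exact absurd rfl hxc
  · exact h.ascends_iff_of_btwn hac hxc hx

end IsSCExt

theorem bset_self (lt u l : S → S → Prop) (a : S) : BSet lt u l a a = {a} := by
  simp [BSet]

/-- If `c ∈ B_{a,b}` then `B_{a,c} ∩ B_{c,b} = {c}`. -/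
theorem stmt4 {S : Type*} [PartialOrder S] (u l : S → S → Prop)
    (hsce : IsSCExt ((· < ·) : S → S → Prop) u l) (a b c : S)
    (hc : c ∈ BSet ((· < ·) : S → S → Prop) u l a b) :
    BSet ((· < ·) : S → S → Prop) u l a c ∩ BSet ((· < ·) : S → S → Prop) u l c b = {c} := by
  refine Set.eq_singleton_iff_unique_mem.2 ⟨⟨Or.inl (Or.inr rfl), Or.inl (Or.inl rfl)⟩, ?_⟩
  rintro x ⟨hxac, hxcb⟩
  by_contra hxc
  rcases eq_or_ne c a with rfl | hca
  · exact hxc (by simpa [bset_self] using hxac)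
  rcases eq_or_ne c b with rfl | hcb
  · exact hxc (by simpa [bset_self] using hxcb)
  obtain ⟨-, hc⟩ : a ≠ b ∧ Btwn (· < ·) u l a b c := by
    rcases hc with (rfl | rfl) | hc
    exacts [absurd rfl hca, absurd rfl hcb, hc]
  rw [hsce.bset_comm] at hxcb
  refine (xor_iff_not_iff _ _).1 (hsce.xor_ascends_of_btwn hca hcb hc) ?_
  exact (hsce.ascends_iff_of_mem_bset hxac hxc).symm.trans (hsce.ascends_iff_of_mem_bset hxcb hxc)

end PaperSC
end

section
/- Let S be a partially ordered set with a simply connected extension (∼_u, ∼_l), and let a ≠ b in S. Define, for x, y ∈ B_{a,b}, x ⪯ y iff x ∈ B_{a,y}. Then ⪯ is a total (linear) order on the set B_{a,b}, with least element a and greatest element b. -/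
open Pointwise

namespace PaperSC

variable {S : Type*}

/-!
Reversing the order of `S` swaps `∼ᵤ` and `∼ₗ` and leaves every between set unchanged, so
for each order axiom only the cases `a < c` and `a ∼ₗ c` of the right endpoint `c` need work.
There membership in `B_{a,c}` is an explicit four-way disjunction, and each resulting case is
closed by the order of `S`, by condition (ii) applied to a common bound, or by acyclicity (iii).
Transitivity (`y ∈ B_{a,z}` implies `B_{a,y} ⊆ B_{a,z}`) and antisymmetry hold for arbitrary
endpoints; totality uses that both elements lie in `B_{a,b}`, whose points other than `a, b`
split into two classes, each totally ordered by `<`.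
-/

section Basic

variable {lt u l : S → S → Prop} {a c x : S}

theorem left_mem_bset : a ∈ BSet lt u l a c := Or.inl (Or.inl rfl)

theorem right_mem_bset : c ∈ BSet lt u l a c := Or.inl (Or.inr rfl)

theorem mem_bset_self_iff : x ∈ BSet lt u l a a ↔ x = a := by
  simp [BSet]

end Basic

namespace IsSCExt

variable [PartialOrder S] {u l : S → S → Prop} {x y z : S}

theorem lt_or_gt_or_u_or_l (hs : IsSCExt (· < ·) u l) (hne : x ≠ y) :
    x < y ∨ y < x ∨ u x y ∨ l x y :=
  (hs.exactly_one x y hne).1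

theorem not_lt_of_u (hs : IsSCExt (· < ·) u l) (h : u x y) : ¬ x < y :=
  fun hlt => ((hs.exactly_one x y hlt.ne).2.1 hlt).2.1 h

theorem not_gt_of_u (hs : IsSCExt (· < ·) u l) (h : u x y) : ¬ y < x :=
  hs.not_lt_of_u (hs.u_symm x y h)

theorem not_lt_of_l (hs : IsSCExt (· < ·) u l) (h : l x y) : ¬ x < y :=
  fun hlt => ((hs.exactly_one x y hlt.ne).2.1 hlt).2.2 h

theorem not_gt_of_l (hs : IsSCExt (· < ·) u l) (h : l x y) : ¬ y < x :=
  hs.not_lt_of_l (hs.l_symm x y h)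

theorem not_l_of_u (hs : IsSCExt (· < ·) u l) (hne : x ≠ y) (h : u x y) : ¬ l x y :=
  (hs.exactly_one x y hne).2.2.2 h

theorem l_of_incomp (hs : IsSCExt (· < ·) u l) (h : Incomp (· < ·) x y) (hu : ¬ u x y) :
    l x y :=
  (((hs.lt_or_gt_or_u_or_l h.1).resolve_left h.2.1).resolve_left h.2.2).resolve_left hu

theorem not_l_of_le (hs : IsSCExt (· < ·) u l) (hne : x ≠ y) (hx : x ≤ z)
    (hy : y ≤ z) : ¬ l x y := fun h =>
  hs.not_l_of_u hne (hs.u_of_ub x y ⟨hne, hs.not_lt_of_l h, hs.not_gt_of_l h⟩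
    ⟨z, hx.eq_or_lt, hy.eq_or_lt⟩) h

theorem not_u_of_ge (hs : IsSCExt (· < ·) u l) (hne : x ≠ y) (hx : z ≤ x)
    (hy : z ≤ y) : ¬ u x y := fun h =>
  hs.not_l_of_u hne h (hs.l_of_lb x y ⟨hne, hs.not_lt_of_u h, hs.not_gt_of_u h⟩
    ⟨z, hx.eq_or_lt, hy.eq_or_lt⟩)

theorem dual (hs : IsSCExt (· < ·) u l) :
    IsSCExt ((· < ·) : Sᵒᵈ → Sᵒᵈ → Prop) l u where
  u_symm := hs.l_symm
  l_symm := hs.u_symm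
  exactly_one x y hne := by
    have := hs.exactly_one x y hne
    simp only [ExactlyOne4] at this ⊢
    tauto
  u_of_ub x y hinc hub := by
    obtain ⟨z, hx, hy⟩ := hub
    exact hs.l_of_lb x y ⟨hinc.1, hinc.2.2, hinc.2.1⟩
      ⟨z, hx.imp_left Eq.symm, hy.imp_left Eq.symm⟩
  l_of_lb x y hinc hlb := by
    obtain ⟨z, hx, hy⟩ := hlb
    exact hs.u_of_ub x y ⟨hinc.1, hinc.2.2, hinc.2.1⟩
      ⟨z, hx.imp_left Eq.symm, hy.imp_left Eq.symm⟩
  acyclic x y z hl hu := hs.acyclic x z y hu hl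

end IsSCExt

section Membership

variable [PartialOrder S] {u l : S → S → Prop} {a c x : S}

theorem mem_bset_dual_iff (hs : IsSCExt (· < ·) u l) :
    x ∈ BSet ((· < ·) : Sᵒᵈ → Sᵒᵈ → Prop) l u a c ↔ x ∈ BSet (· < ·) u l a c := by
  change x ∈ BSet (fun p q : S => q < p) l u a c ↔ _
  have hu := hs.u_symm
  have hl := hs.l_symm
  simp only [BSet, Btwn, Set.mem_union, Set.mem_insert_iff, Set.mem_singleton_iff,
    Set.mem_ofPred_eq]
  grind

theorem mem_bset_of_lt (hs : IsSCExt (· < ·) u l) (h : a < c) :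
    x ∈ BSet (· < ·) u l a c ↔ x = a ∨ x = c ∨ (a < x ∧ x < c) ∨ (u a x ∧ l x c) := by
  have hl : ¬ l a c := fun h' => hs.not_lt_of_l h' h
  have hu : ¬ u a c := fun h' => hs.not_lt_of_u h' h
  simp only [BSet, Btwn, Set.mem_union, Set.mem_insert_iff, Set.mem_singleton_iff,
    Set.mem_ofPred_eq, h, h.ne, h.not_gt, hl, hu, not_false_eq_true, ne_eq, true_and,
    false_and, or_false, or_assoc]

theorem mem_bset_of_gt (hs : IsSCExt (· < ·) u l) (h : c < a) :
    x ∈ BSet (· < ·) u l a c ↔ x = a ∨ x = c ∨ (c < x ∧ x < a) ∨ (u c x ∧ l x a) := by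
  have hl : ¬ l a c := fun h' => hs.not_gt_of_l h' h
  have hu : ¬ u a c := fun h' => hs.not_gt_of_u h' h
  simp only [BSet, Btwn, Set.mem_union, Set.mem_insert_iff, Set.mem_singleton_iff,
    Set.mem_ofPred_eq, h, h.ne', h.not_gt, hl, hu, not_false_eq_true, ne_eq, true_and,
    false_and, false_or, or_false, or_assoc]

theorem mem_bset_of_u (hs : IsSCExt (· < ·) u l) (hne : a ≠ c) (h : u a c) :
    x ∈ BSet (· < ·) u l a c ↔ x = a ∨ x = c ∨ (u a x ∧ c < x) ∨ (u c x ∧ a < x) := by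
  simp only [BSet, Btwn, Set.mem_union, Set.mem_insert_iff, Set.mem_singleton_iff,
    Set.mem_ofPred_eq, h, hne, hs.not_lt_of_u h, hs.not_gt_of_u h, hs.not_l_of_u hne h,
    not_false_eq_true, ne_eq, true_and, false_and, false_or, or_assoc]

theorem mem_bset_of_l (hs : IsSCExt (· < ·) u l) (hne : a ≠ c) (h : l a c) :
    x ∈ BSet (· < ·) u l a c ↔ x = a ∨ x = c ∨ (l a x ∧ x < c) ∨ (l c x ∧ x < a) := by
  have hu : ¬ u a c := fun h' => hs.not_l_of_u hne h' h
  simp only [BSet, Btwn, Set.mem_union, Set.mem_insert_iff, Set.mem_singleton_iff,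
    Set.mem_ofPred_eq, h, hne, hs.not_lt_of_l h, hs.not_gt_of_l h, hu,
    not_false_eq_true, ne_eq, true_and, false_and, false_or, or_false, or_assoc]

end Membership

section Order

variable [PartialOrder S] {u l : S → S → Prop} {a b x y z : S}

theorem mem_bset_trans_of_lt (hs : IsSCExt (· < ·) u l) (haz : a < z)
    (hxy : x ∈ BSet (· < ·) u l a y) (hyz : y ∈ BSet (· < ·) u l a z) :
    x ∈ BSet (· < ·) u l a z := by
  obtain rfl | hxz := eq_or_ne x z; · exact right_mem_bset
  obtain rfl | hxy' := eq_or_ne x y; · exact hyz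
  obtain rfl | hxa := eq_or_ne x a; · exact left_mem_bset
  rw [mem_bset_of_lt hs haz] at hyz ⊢
  rcases hyz with rfl | rfl | ⟨hay, hyz⟩ | ⟨hay, hyz⟩
  · exact absurd (mem_bset_self_iff.1 hxy) hxa
  · exact (mem_bset_of_lt hs haz).1 hxy
  · rcases (mem_bset_of_lt hs hay).1 hxy with rfl | rfl | ⟨hax, hxy⟩ | ⟨hax, hxy⟩
    · exact absurd rfl hxa
    · exact absurd rfl hxy'
    · exact .inr (.inr (.inl ⟨hax, hxy.trans hyz⟩))
    · refine .inr (.inr (.inr ⟨hax, hs.l_of_incomp ⟨hxz, ?_, ?_⟩ ?_⟩))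
      · exact fun hxz => hs.not_l_of_le hxy' hxz.le hyz.le hxy
      · exact fun hzx => hs.not_lt_of_u hax (haz.trans hzx)
      · exact fun hu => lt_asymm hyz (hs.acyclic x z y hu hxy)
  · have hya : a ≠ y := by rintro rfl; exact hs.not_lt_of_l hyz haz
    rcases (mem_bset_of_u hs hya hay).1 hxy with rfl | rfl | ⟨hax, hyx⟩ | ⟨hyx, hax⟩
    · exact absurd rfl hxa
    · exact absurd rfl hxy'
    · refine .inr (.inr (.inr ⟨hax, hs.l_of_incomp ⟨hxz, ?_, ?_⟩ ?_⟩))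
      · exact fun hxz => hs.not_lt_of_l hyz (hyx.trans hxz)
      · exact fun hzx => hs.not_lt_of_u hax (haz.trans hzx)
      · exact fun hu => lt_asymm hyx (hs.acyclic z x y (hs.u_symm x z hu) (hs.l_symm y z hyz))
    · exact .inr (.inr (.inl ⟨hax, hs.acyclic y x z hyx hyz⟩))

theorem mem_bset_trans_of_l (hs : IsSCExt (· < ·) u l) (haz' : a ≠ z)
    (haz : l a z) (hxy : x ∈ BSet (· < ·) u l a y) (hyz : y ∈ BSet (· < ·) u l a z) :
    x ∈ BSet (· < ·) u l a z := by
  obtain rfl | hxz := eq_or_ne x z; · exact right_mem_bset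
  obtain rfl | hxy' := eq_or_ne x y; · exact hyz
  obtain rfl | hxa := eq_or_ne x a; · exact left_mem_bset
  rw [mem_bset_of_l hs haz' haz] at hyz ⊢
  rcases hyz with rfl | rfl | ⟨hay, hyz⟩ | ⟨hzy, hya⟩
  · exact absurd (mem_bset_self_iff.1 hxy) hxa
  · exact (mem_bset_of_l hs haz' haz).1 hxy
  · have hay' : a ≠ y := by rintro rfl; exact hs.not_lt_of_l haz hyz
    rcases (mem_bset_of_l hs hay' hay).1 hxy with rfl | rfl | ⟨hax, hxy⟩ | ⟨hyx, hxa⟩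
    · exact absurd rfl hxa
    · exact absurd rfl hxy'
    · exact .inr (.inr (.inl ⟨hax, hxy.trans hyz⟩))
    · refine .inr (.inr (.inr ⟨hs.l_of_incomp ⟨hxz.symm, ?_, ?_⟩ ?_, hxa⟩))
      · exact fun hzx => hs.not_lt_of_l hyx (hyz.trans hzx)
      · exact fun hxz => hs.not_l_of_le hxy'.symm hyz.le hxz.le hyx
      · exact fun hu => lt_asymm hyz (hs.acyclic x z y (hs.u_symm z x hu) (hs.l_symm y x hyx))
  · rcases (mem_bset_of_gt hs hya).1 hxy with rfl | rfl | ⟨hyx, hxa⟩ | ⟨hyx, hxa⟩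
    · exact absurd rfl hxa
    · exact absurd rfl hxy'
    · refine .inr (.inr (.inr ⟨hs.l_of_incomp ⟨hxz.symm, ?_, ?_⟩ ?_, hxa⟩))
      · exact fun hzx => hs.not_gt_of_l haz (hzx.trans hxa)
      · exact fun hxz => hs.not_gt_of_l hzy (hyx.trans hxz)
      · exact fun hu => lt_asymm hyx (hs.acyclic z x y hu hzy)
    · exact .inr (.inr (.inl ⟨hs.l_symm x a hxa, hs.acyclic y x z hyx (hs.l_symm z y hzy)⟩))

theorem mem_bset_trans (hs : IsSCExt (· < ·) u l)
    (hxy : x ∈ BSet (· < ·) u l a y) (hyz : y ∈ BSet (· < ·) u l a z) :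
    x ∈ BSet (· < ·) u l a z := by
  obtain rfl | haz := eq_or_ne a z
  · rwa [mem_bset_self_iff.1 hyz] at hxy
  wlog h : a < z ∨ l a z generalizing S
  · have h' : z < a ∨ u a z := by
      have := hs.lt_or_gt_or_u_or_l haz
      tauto
    rw [← mem_bset_dual_iff hs] at hxy hyz ⊢
    exact this hs.dual hxy hyz haz h'
  rcases h with h | h
  · exact mem_bset_trans_of_lt hs h hxy hyz
  · exact mem_bset_trans_of_l hs haz h hxy hyz

theorem mem_bset_antisymm_of_lt (hs : IsSCExt (· < ·) u l) (hay : a < y)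
    (hxy : x ∈ BSet (· < ·) u l a y) (hyx : y ∈ BSet (· < ·) u l a x) : x = y := by
  by_contra hne
  rcases (mem_bset_of_lt hs hay).1 hxy with rfl | rfl | ⟨hax, hxy⟩ | ⟨hax, hxy⟩
  · exact hay.ne' (mem_bset_self_iff.1 hyx)
  · exact hne rfl
  · rcases (mem_bset_of_lt hs hax).1 hyx with rfl | rfl | ⟨-, hyx⟩ | ⟨hay', -⟩
    · exact lt_irrefl _ hay
    · exact hne rfl
    · exact lt_asymm hxy hyx
    · exact hs.not_lt_of_u hay' hay
  · have hax' : a ≠ x := by rintro rfl; exact hs.not_lt_of_l hxy hay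
    rcases (mem_bset_of_u hs hax' hax).1 hyx with rfl | rfl | ⟨hay', -⟩ | ⟨hxy', -⟩
    · exact lt_irrefl _ hay
    · exact hne rfl
    · exact hs.not_lt_of_u hay' hay
    · exact hs.not_l_of_u hne hxy' hxy

theorem mem_bset_antisymm_of_l (hs : IsSCExt (· < ·) u l) (hay' : a ≠ y)
    (hay : l a y) (hxy : x ∈ BSet (· < ·) u l a y) (hyx : y ∈ BSet (· < ·) u l a x) :
    x = y := by
  by_contra hne
  rcases (mem_bset_of_l hs hay' hay).1 hxy with rfl | rfl | ⟨hax, hxy⟩ | ⟨hyx', hxa⟩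
  · exact hay' (mem_bset_self_iff.1 hyx).symm
  · exact hne rfl
  · have hax' : a ≠ x := by rintro rfl; exact hs.not_lt_of_l hay hxy
    rcases (mem_bset_of_l hs hax' hax).1 hyx with rfl | rfl | ⟨-, hyx⟩ | ⟨hxy', -⟩
    · exact hay' rfl
    · exact hne rfl
    · exact lt_asymm hxy hyx
    · exact hs.not_lt_of_l hxy' hxy
  · rcases (mem_bset_of_gt hs hxa).1 hyx with rfl | rfl | ⟨hxy, -⟩ | ⟨hxy', -⟩
    · exact hay' rfl
    · exact hne rfl
    · exact hs.not_gt_of_l hyx' hxy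
    · exact hs.not_l_of_u hne hxy' (hs.l_symm y x hyx')

theorem mem_bset_antisymm (hs : IsSCExt (· < ·) u l)
    (hxy : x ∈ BSet (· < ·) u l a y) (hyx : y ∈ BSet (· < ·) u l a x) : x = y := by
  obtain rfl | hay := eq_or_ne a y
  · exact mem_bset_self_iff.1 hxy
  wlog h : a < y ∨ l a y generalizing S
  · have h' : y < a ∨ u a y := by
      have := hs.lt_or_gt_or_u_or_l hay
      tauto
    rw [← mem_bset_dual_iff hs] at hxy hyx
    exact this (S := Sᵒᵈ) hs.dual hxy hyx hay h'
  rcases h with h | h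
  · exact mem_bset_antisymm_of_lt hs h hxy hyx
  · exact mem_bset_antisymm_of_l hs hay h hxy hyx

theorem mem_bset_total_of_lt_of_u (hs : IsSCExt (· < ·) u l) (hxy : x ≠ y)
    (hax : a < x) (hxb : x < b) (hay : u a y) (hyb : l y b) :
    x ∈ BSet (· < ·) u l a y ∨ y ∈ BSet (· < ·) u l a x := by
  have hay' : a ≠ y := by rintro rfl; exact hs.not_lt_of_l hyb (hax.trans hxb)
  rcases hs.lt_or_gt_or_u_or_l hxy with h | h | h | h
  · exact absurd (hax.trans h) (hs.not_lt_of_u hay)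
  · exact absurd (h.trans hxb) (hs.not_lt_of_l hyb)
  · exact Or.inl ((mem_bset_of_u hs hay' hay).2 (.inr (.inr (.inr ⟨hs.u_symm x y h, hax⟩))))
  · exact Or.inr ((mem_bset_of_lt hs hax).2 (.inr (.inr (.inr ⟨hay, hs.l_symm x y h⟩))))

theorem mem_bset_total_of_lt (hs : IsSCExt (· < ·) u l) (hab : a < b)
    (hx : x ∈ BSet (· < ·) u l a b) (hy : y ∈ BSet (· < ·) u l a b) :
    x ∈ BSet (· < ·) u l a y ∨ y ∈ BSet (· < ·) u l a x := by
  obtain rfl | hxa := eq_or_ne x a; · exact Or.inl left_mem_bset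
  obtain rfl | hya := eq_or_ne y a; · exact Or.inr left_mem_bset
  obtain rfl | hxb := eq_or_ne x b; · exact Or.inr hy
  obtain rfl | hyb := eq_or_ne y b; · exact Or.inl hx
  obtain rfl | hxy := eq_or_ne x y; · exact Or.inl right_mem_bset
  obtain ⟨hax, hxb⟩ | ⟨hax, hxb⟩ :=
    (((mem_bset_of_lt hs hab).1 hx).resolve_left hxa).resolve_left hxb <;>
  obtain ⟨hay, hyb⟩ | ⟨hay, hyb⟩ :=
    (((mem_bset_of_lt hs hab).1 hy).resolve_left hya).resolve_left hyb
  · rcases hs.lt_or_gt_or_u_or_l hxy with h | h | h | h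
    · exact Or.inl ((mem_bset_of_lt hs hay).2 (.inr (.inr (.inl ⟨hax, h⟩))))
    · exact Or.inr ((mem_bset_of_lt hs hax).2 (.inr (.inr (.inl ⟨hay, h⟩))))
    · exact absurd h (hs.not_u_of_ge hxy hax.le hay.le)
    · exact absurd h (hs.not_l_of_le hxy hxb.le hyb.le)
  · exact mem_bset_total_of_lt_of_u hs hxy hax hxb hay hyb
  · exact (mem_bset_total_of_lt_of_u hs hxy.symm hay hyb hax hxb).symm
  · have hax' : a ≠ x := by rintro rfl; exact hs.not_lt_of_l hxb hab
    have hay' : a ≠ y := by rintro rfl; exact hs.not_lt_of_l hyb hab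
    rcases hs.lt_or_gt_or_u_or_l hxy with h | h | h | h
    · exact Or.inr ((mem_bset_of_u hs hax' hax).2 (.inr (.inr (.inl ⟨hay, h⟩))))
    · exact Or.inl ((mem_bset_of_u hs hay' hay).2 (.inr (.inr (.inl ⟨hax, h⟩))))
    · exact absurd (hs.acyclic x y b h hxb) (hs.not_lt_of_l hyb)
    · exact absurd (hs.acyclic x a y (hs.u_symm a x hax) h) (hs.not_lt_of_u hay)

theorem mem_bset_total_of_l_of_gt (hs : IsSCExt (· < ·) u l) (hxy : x ≠ y)
    (hax : l a x) (hxb : x < b) (hby : l b y) (hya : y < a) :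
    x ∈ BSet (· < ·) u l a y ∨ y ∈ BSet (· < ·) u l a x := by
  have hax' : a ≠ x := by rintro rfl; exact hs.not_gt_of_l hby (hya.trans hxb)
  rcases hs.lt_or_gt_or_u_or_l hxy with h | h | h | h
  · exact absurd (h.trans hya) (hs.not_gt_of_l hax)
  · exact absurd (h.trans hxb) (hs.not_gt_of_l hby)
  · exact Or.inl ((mem_bset_of_gt hs hya).2
      (.inr (.inr (.inr ⟨hs.u_symm x y h, hs.l_symm a x hax⟩))))
  · exact Or.inr ((mem_bset_of_l hs hax' hax).2 (.inr (.inr (.inr ⟨h, hya⟩))))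

theorem mem_bset_total_of_l (hs : IsSCExt (· < ·) u l) (hab' : a ≠ b)
    (hab : l a b) (hx : x ∈ BSet (· < ·) u l a b) (hy : y ∈ BSet (· < ·) u l a b) :
    x ∈ BSet (· < ·) u l a y ∨ y ∈ BSet (· < ·) u l a x := by
  obtain rfl | hxa := eq_or_ne x a; · exact Or.inl left_mem_bset
  obtain rfl | hya := eq_or_ne y a; · exact Or.inr left_mem_bset
  obtain rfl | hxb := eq_or_ne x b; · exact Or.inr hy
  obtain rfl | hyb := eq_or_ne y b; · exact Or.inl hx
  obtain rfl | hxy := eq_or_ne x y; · exact Or.inl right_mem_bset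
  obtain ⟨hax, hxb⟩ | ⟨hbx, hxa⟩ :=
    (((mem_bset_of_l hs hab' hab).1 hx).resolve_left hxa).resolve_left hxb <;>
  obtain ⟨hay, hyb⟩ | ⟨hby, hya⟩ :=
    (((mem_bset_of_l hs hab' hab).1 hy).resolve_left hya).resolve_left hyb
  · have hax' : a ≠ x := by rintro rfl; exact hs.not_lt_of_l hab hxb
    have hay' : a ≠ y := by rintro rfl; exact hs.not_lt_of_l hab hyb
    rcases hs.lt_or_gt_or_u_or_l hxy with h | h | h | h
    · exact Or.inl ((mem_bset_of_l hs hay' hay).2 (.inr (.inr (.inl ⟨hax, h⟩))))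
    · exact Or.inr ((mem_bset_of_l hs hax' hax).2 (.inr (.inr (.inl ⟨hay, h⟩))))
    · exact absurd (hs.acyclic x y a h (hs.l_symm a x hax)) (hs.not_gt_of_l hay)
    · exact absurd h (hs.not_l_of_le hxy hxb.le hyb.le)
  · exact mem_bset_total_of_l_of_gt hs hxy hax hxb hby hya
  · exact (mem_bset_total_of_l_of_gt hs hxy.symm hay hyb hbx hxa).symm
  · rcases hs.lt_or_gt_or_u_or_l hxy with h | h | h | h
    · exact Or.inr ((mem_bset_of_gt hs hxa).2 (.inr (.inr (.inl ⟨h, hya⟩))))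
    · exact Or.inl ((mem_bset_of_gt hs hya).2 (.inr (.inr (.inl ⟨h, hxa⟩))))
    · exact absurd (hs.acyclic x y b h (hs.l_symm b x hbx)) (hs.not_gt_of_l hby)
    · exact absurd h (hs.not_l_of_le hxy hxa.le hya.le)

theorem mem_bset_total (hs : IsSCExt (· < ·) u l)
    (hx : x ∈ BSet (· < ·) u l a b) (hy : y ∈ BSet (· < ·) u l a b) :
    x ∈ BSet (· < ·) u l a y ∨ y ∈ BSet (· < ·) u l a x := by
  obtain rfl | hab := eq_or_ne a b
  · rw [mem_bset_self_iff.1 hx, mem_bset_self_iff.1 hy]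
    exact Or.inl left_mem_bset
  wlog h : a < b ∨ l a b generalizing S
  · have h' : b < a ∨ u a b := by
      have := hs.lt_or_gt_or_u_or_l hab
      tauto
    rw [← mem_bset_dual_iff hs] at hx hy ⊢
    rw [← mem_bset_dual_iff hs]
    exact this hs.dual hx hy hab h'
  rcases h with h | h
  · exact mem_bset_total_of_lt hs h hx hy
  · exact mem_bset_total_of_l hs hab h hx hy

end Order

theorem stmt6_general {S : Type*} [PartialOrder S] (u l : S → S → Prop)
    (hsce : IsSCExt ((· < ·) : S → S → Prop) u l) (a b : S) :
    -- reflexivity on `B_{a,b}`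
    (∀ x ∈ BSet ((· < ·) : S → S → Prop) u l a b,
      x ∈ BSet ((· < ·) : S → S → Prop) u l a x) ∧
    -- antisymmetry
    (∀ x ∈ BSet ((· < ·) : S → S → Prop) u l a b,
      ∀ y ∈ BSet ((· < ·) : S → S → Prop) u l a b,
        x ∈ BSet ((· < ·) : S → S → Prop) u l a y →
        y ∈ BSet ((· < ·) : S → S → Prop) u l a x → x = y) ∧
    -- transitivity
    (∀ x ∈ BSet ((· < ·) : S → S → Prop) u l a b,
      ∀ y ∈ BSet ((· < ·) : S → S → Prop) u l a b,
        ∀ z ∈ BSet ((· < ·) : S → S → Prop) u l a b,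
          x ∈ BSet ((· < ·) : S → S → Prop) u l a y →
          y ∈ BSet ((· < ·) : S → S → Prop) u l a z →
          x ∈ BSet ((· < ·) : S → S → Prop) u l a z) ∧
    -- totality
    (∀ x ∈ BSet ((· < ·) : S → S → Prop) u l a b,
      ∀ y ∈ BSet ((· < ·) : S → S → Prop) u l a b,
        x ∈ BSet ((· < ·) : S → S → Prop) u l a y ∨
        y ∈ BSet ((· < ·) : S → S → Prop) u l a x) ∧
    -- `a` is the least element
    (∀ x ∈ BSet ((· < ·) : S → S → Prop) u l a b,
      a ∈ BSet ((· < ·) : S → S → Prop) u l a x) ∧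
    -- `b` is the greatest element
    (∀ x ∈ BSet ((· < ·) : S → S → Prop) u l a b,
      x ∈ BSet ((· < ·) : S → S → Prop) u l a b) :=
  ⟨fun _ _ => right_mem_bset, fun _ _ _ _ => mem_bset_antisymm hsce,
    fun _ _ _ _ _ _ => mem_bset_trans hsce, fun _ hx _ hy => mem_bset_total hsce hx hy,
    fun _ _ => left_mem_bset, fun _ hx => hx⟩

/-- For `a ≠ b`, the relation `x ⪯ y ↔ x ∈ B_{a,y}` is a total (linear) order
on `B_{a,b}`, with least element `a` and greatest element `b`. -/
theorem stmt6 {S : Type*} [PartialOrder S] (u l : S → S → Prop)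
    (hsce : IsSCExt ((· < ·) : S → S → Prop) u l) (a b : S) (hab : a ≠ b) :
    -- reflexivity on `B_{a,b}`
    (∀ x ∈ BSet ((· < ·) : S → S → Prop) u l a b,
      x ∈ BSet ((· < ·) : S → S → Prop) u l a x) ∧
    -- antisymmetry
    (∀ x ∈ BSet ((· < ·) : S → S → Prop) u l a b,
      ∀ y ∈ BSet ((· < ·) : S → S → Prop) u l a b,
        x ∈ BSet ((· < ·) : S → S → Prop) u l a y →
        y ∈ BSet ((· < ·) : S → S → Prop) u l a x → x = y) ∧
    -- transitivity
    (∀ x ∈ BSet ((· < ·) : S → S → Prop) u l a b,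
      ∀ y ∈ BSet ((· < ·) : S → S → Prop) u l a b,
        ∀ z ∈ BSet ((· < ·) : S → S → Prop) u l a b,
          x ∈ BSet ((· < ·) : S → S → Prop) u l a y →
          y ∈ BSet ((· < ·) : S → S → Prop) u l a z →
          x ∈ BSet ((· < ·) : S → S → Prop) u l a z) ∧
    -- totality
    (∀ x ∈ BSet ((· < ·) : S → S → Prop) u l a b,
      ∀ y ∈ BSet ((· < ·) : S → S → Prop) u l a b,
        x ∈ BSet ((· < ·) : S → S → Prop) u l a y ∨
        y ∈ BSet ((· < ·) : S → S → Prop) u l a x) ∧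
    -- `a` is the least element
    (∀ x ∈ BSet ((· < ·) : S → S → Prop) u l a b,
      a ∈ BSet ((· < ·) : S → S → Prop) u l a x) ∧
    -- `b` is the greatest element
    (∀ x ∈ BSet ((· < ·) : S → S → Prop) u l a b,
      x ∈ BSet ((· < ·) : S → S → Prop) u l a b) :=
  stmt6_general u l hsce a b

end PaperSC
end
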